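/- Under the setup, no two mixed arcs cross: if (b₁,r₁) ∈ E' has a mixed witness u₁, (b₂,r₂) ∈ E' has a mixed witness u₂, and t u₁ ≠ t u₂, then, writing aᵢ = min(t bᵢ, t rᵢ) and cᵢ = max(t bᵢ, t rᵢ) for i = 1,2, the open intervals (a₁, t u₁) and (a₂, t u₂) do not interleave, and the open intervals (t u₁, c₁) and (t u₂, c₂) do not interleave. -/

import Mathlib

/-- The above-anchored L-frame `A(t,h,w) = ({t} × [-t, -t+h]) ∪ ([t, t+w] × {-t})`. -/
def Aframe (t h w : ℝ) : Set (ℝ × ℝ) :=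
  ({t} : Set ℝ) ×ˢ Set.Icc (-t) (-t + h) ∪ Set.Icc t (t + w) ×ˢ ({-t} : Set ℝ)

/-- The intersection graph of a family of subsets of the plane. -/
def interGraph {V : Type*} (F : V → Set (ℝ × ℝ)) : SimpleGraph V where
  Adj u v := u ≠ v ∧ (F u ∩ F v).Nonempty
  symm := by
    constructor
    intro u v h
    exact ⟨h.1.symm, by rw [Set.inter_comm]; exact h.2⟩
  loopless := by
    constructor
    intro u h
    exact h.1 rfl

/-- A set of vertices is a dominating set: every vertex is in it or adjacent to a member. -/
def IsDomSet {V : Type*} (G : SimpleGraph V) (D : Set V) : Prop :=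
  ∀ v, v ∈ D ∨ ∃ u ∈ D, G.Adj u v

/-- Euclidean distance between the corners `(t b, -(t b))` and `(t r, -(t r))` of the
L-frames indexed by `b` and `r`. -/
noncomputable def cornerDist {V : Type*} (t : V → ℝ) (b r : V) : ℝ :=
  Real.sqrt ((t b - t r) ^ 2 + ((-(t b)) - (-(t r))) ^ 2)

/-- `(b,r) ∈ S(u)`: `b ∈ B`, `r ∈ R`, and both frames `F b` and `F r` intersect `F u`. -/
def InS {V : Type*} (F : V → Set (ℝ × ℝ)) (B R : Set V) (u b r : V) : Prop :=
  b ∈ B ∧ r ∈ R ∧ (F b ∩ F u).Nonempty ∧ (F r ∩ F u).Nonempty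

/-- `u` is a witness of `(b,r)`: `(b,r) ∈ S(u)` and the distance between the corners of
`F b` and `F r` is minimum among all pairs in `S(u)`. -/
def IsWitness {V : Type*} (F : V → Set (ℝ × ℝ)) (t : V → ℝ) (B R : Set V)
    (u b r : V) : Prop :=
  InS F B R u b r ∧ ∀ b' r', InS F B R u b' r' → cornerDist t b r ≤ cornerDist t b' r'

/-- `(b,r) ∈ E'`: the pair admits a witness. -/
def InE' {V : Type*} (F : V → Set (ℝ × ℝ)) (t : V → ℝ) (B R : Set V) (b r : V) : Prop :=
  ∃ u, IsWitness F t B R u b r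

/-- `u` is a top witness of `(b,r)`. -/
def TopWitness {V : Type*} (F : V → Set (ℝ × ℝ)) (t : V → ℝ) (B R : Set V)
    (u b r : V) : Prop :=
  IsWitness F t B R u b r ∧ t b ≤ t u ∧ t r ≤ t u

/-- `u` is a down witness of `(b,r)`. -/
def DownWitness {V : Type*} (F : V → Set (ℝ × ℝ)) (t : V → ℝ) (B R : Set V)
    (u b r : V) : Prop :=
  IsWitness F t B R u b r ∧ t u ≤ t b ∧ t u ≤ t r

/-- `u` is a mixed witness of `(b,r)`. -/
def MixedWitness {V : Type*} (F : V → Set (ℝ × ℝ)) (t : V → ℝ) (B R : Set V)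
    (u b r : V) : Prop :=
  IsWitness F t B R u b r ∧ min (t b) (t r) < t u ∧ t u < max (t b) (t r)

/-- Open intervals `(p,q)` and `(r,s)` interleave. -/
def Interleave (p q r s : ℝ) : Prop :=
  (p < r ∧ r < q ∧ q < s) ∨ (r < p ∧ p < s ∧ s < q)

/-!
Two above-anchored L-frames with corners at parameters `s < s'` meet iff `s' - s` is at most
both the horizontal arm of the earlier frame and the vertical arm of the later one.
A witness `u` of `(b, r)` meets no frame of `B ∪ R` whose corner lies strictly between those of
`b` and `r`: that frame, paired with `r` or with `b`, would be a closer pair in `S(u)`.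
If the left intervals of two mixed arcs interleave, `a₁ < a₂ < t u₁ < t u₂`, then the arms
`w ≥ t u₂ - a₂` at `a₂` and `h u₁ ≥ t u₁ - a₁` make the frame at `a₂` meet `F u₁`, although
`a₁ < a₂ < c₁`.
Crossing right intervals `t u₁ < t u₂ < c₁ < c₂` are excluded in the same way by the frame
at `c₁` and `F u₂`.
-/

lemma Aframe_inter_nonempty_iff {s h w s' h' w' : ℝ} (hs : s < s') :
    (Aframe s h w ∩ Aframe s' h' w').Nonempty ↔ s' - s ≤ w ∧ s' - s ≤ h' := by
  constructor
  · rintro ⟨⟨px, py⟩, hp, hp'⟩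
    simp only [Aframe, Set.mem_union, Set.mem_prod, Set.mem_singleton_iff, Set.mem_Icc]
      at hp hp'
    rcases hp with ⟨h1, h2, h3⟩ | ⟨⟨h1, h2⟩, h3⟩ <;>
      rcases hp' with ⟨h1', h2', h3'⟩ | ⟨⟨h1', h2'⟩, h3'⟩ <;>
      constructor <;> linarith
  · rintro ⟨hw, hh'⟩
    exact ⟨(s', -s), Or.inr ⟨⟨hs.le, by linarith⟩, rfl⟩, Or.inl ⟨rfl, by linarith, by linarith⟩⟩

lemma abs_sub_lt_abs_sub_of_mem_Ioo_min_max {x b r : ℝ} (hx : x ∈ Set.Ioo (min b r) (max b r)) :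
    |x - r| < |b - r| ∧ |b - x| < |b - r| := by
  obtain ⟨hlo, hhi⟩ := hx
  rcases le_total b r with hbr | hbr
  · rw [min_eq_left hbr] at hlo
    rw [max_eq_right hbr] at hhi
    rw [abs_sub_comm b r, abs_of_nonneg (sub_nonneg.2 hbr)]
    constructor <;> rw [abs_sub_lt_iff] <;> constructor <;> linarith
  · rw [min_eq_right hbr] at hlo
    rw [max_eq_left hbr] at hhi
    rw [abs_of_nonneg (sub_nonneg.2 hbr)]
    constructor <;> rw [abs_sub_lt_iff] <;> constructor <;> linarith

section

variable {V : Type*} {t h w : V → ℝ} {F : V → Set (ℝ × ℝ)} {B R : Set V}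

lemma cornerDist_eq (t : V → ℝ) (b r : V) : cornerDist t b r = √2 * |t b - t r| := by
  rw [cornerDist, ← Real.sqrt_sq_eq_abs, ← Real.sqrt_mul (by norm_num)]
  ring_nf

lemma cornerDist_lt_cornerDist_iff (t : V → ℝ) (a b c d : V) :
    cornerDist t a b < cornerDist t c d ↔ |t a - t b| < |t c - t d| := by
  simp only [cornerDist_eq]
  exact mul_lt_mul_iff_right₀ (by positivity)

lemma frames_inter_nonempty_iff (hF : ∀ v, F v = Aframe (t v) (h v) (w v)) {a b : V}
    (hab : t a < t b) :
    (F a ∩ F b).Nonempty ↔ t b - t a ≤ w a ∧ t b - t a ≤ h b := by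
  rw [hF a, hF b, Aframe_inter_nonempty_iff hab]

lemma InS.exists_eq_min {u b r : V} (hS : InS F B R u b r) :
    ∃ x, (x ∈ B ∨ x ∈ R) ∧ t x = min (t b) (t r) ∧ (F x ∩ F u).Nonempty := by
  obtain ⟨hb, hr, hbu, hru⟩ := hS
  rcases min_choice (t b) (t r) with hmin | hmin
  · exact ⟨b, .inl hb, hmin.symm, hbu⟩
  · exact ⟨r, .inr hr, hmin.symm, hru⟩

lemma InS.exists_eq_max {u b r : V} (hS : InS F B R u b r) :
    ∃ y, (y ∈ B ∨ y ∈ R) ∧ t y = max (t b) (t r) ∧ (F y ∩ F u).Nonempty := by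
  obtain ⟨hb, hr, hbu, hru⟩ := hS
  rcases max_choice (t b) (t r) with hmax | hmax
  · exact ⟨b, .inl hb, hmax.symm, hbu⟩
  · exact ⟨r, .inr hr, hmax.symm, hru⟩

lemma IsWitness.notMem_Ioo {u b r v : V} (hu : IsWitness F t B R u b r)
    (hv : v ∈ B ∨ v ∈ R) (hvu : (F v ∩ F u).Nonempty) :
    t v ∉ Set.Ioo (min (t b) (t r)) (max (t b) (t r)) := by
  intro hbetween
  obtain ⟨⟨hb, hr, hbu, hru⟩, hclosest⟩ := hu
  obtain ⟨hvr, hbv⟩ := abs_sub_lt_abs_sub_of_mem_Ioo_min_max hbetween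
  rcases hv with hvB | hvR
  · exact (hclosest v r ⟨hvB, hr, hvu, hru⟩).not_gt
      ((cornerDist_lt_cornerDist_iff t v r b r).2 hvr)
  · exact (hclosest b v ⟨hb, hvR, hbu, hvu⟩).not_gt
      ((cornerDist_lt_cornerDist_iff t b v b r).2 hbv)

lemma MixedWitness.exists_low_end (hF : ∀ v, F v = Aframe (t v) (h v) (w v)) {u b r : V}
    (hu : MixedWitness F t B R u b r) :
    ∃ x, (x ∈ B ∨ x ∈ R) ∧ t x = min (t b) (t r) ∧ t u - t x ≤ w x ∧ t u - t x ≤ h u := by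
  obtain ⟨x, hx, hxt, hxu⟩ := hu.1.1.exists_eq_min (t := t)
  rw [frames_inter_nonempty_iff hF (by linarith [hu.2.1])] at hxu
  exact ⟨x, hx, hxt, hxu⟩

lemma MixedWitness.exists_high_end (hF : ∀ v, F v = Aframe (t v) (h v) (w v)) {u b r : V}
    (hu : MixedWitness F t B R u b r) :
    ∃ y, (y ∈ B ∨ y ∈ R) ∧ t y = max (t b) (t r) ∧ t y - t u ≤ w u ∧ t y - t u ≤ h y := by
  obtain ⟨y, hy, hyt, hyu⟩ := hu.1.1.exists_eq_max (t := t)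
  rw [Set.inter_comm, frames_inter_nonempty_iff hF (by linarith [hu.2.2])] at hyu
  exact ⟨y, hy, hyt, hyu⟩

lemma MixedWitness.not_cross_low (hF : ∀ v, F v = Aframe (t v) (h v) (w v))
    {b₁ r₁ u₁ b₂ r₂ u₂ : V} (h₁ : MixedWitness F t B R u₁ b₁ r₁)
    (h₂ : MixedWitness F t B R u₂ b₂ r₂) :
    ¬ (min (t b₁) (t r₁) < min (t b₂) (t r₂) ∧ min (t b₂) (t r₂) < t u₁ ∧ t u₁ < t u₂) := by
  rintro ⟨ha, ha₂u₁, hu⟩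
  obtain ⟨x₁, -, hx₁, -, hhu₁⟩ := h₁.exists_low_end hF
  obtain ⟨x₂, hx₂, hx₂t, hwx₂, -⟩ := h₂.exists_low_end hF
  refine h₁.1.notMem_Ioo hx₂ ?_ ⟨by linarith, by linarith [h₁.2.2]⟩
  exact (frames_inter_nonempty_iff hF (by linarith)).2 ⟨by linarith, by linarith⟩

lemma MixedWitness.not_cross_high (hF : ∀ v, F v = Aframe (t v) (h v) (w v))
    {b₁ r₁ u₁ b₂ r₂ u₂ : V} (h₁ : MixedWitness F t B R u₁ b₁ r₁)
    (h₂ : MixedWitness F t B R u₂ b₂ r₂) :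
    ¬ (t u₁ < t u₂ ∧ t u₂ < max (t b₁) (t r₁) ∧ max (t b₁) (t r₁) < max (t b₂) (t r₂)) := by
  rintro ⟨hu, hu₂c₁, hc⟩
  obtain ⟨y₁, hy₁, hy₁t, -, hhy₁⟩ := h₁.exists_high_end hF
  obtain ⟨y₂, -, hy₂, hwu₂, -⟩ := h₂.exists_high_end hF
  refine h₂.1.notMem_Ioo hy₁ ?_ ⟨by linarith [h₂.2.1], by linarith⟩
  rw [Set.inter_comm]
  exact (frames_inter_nonempty_iff hF (by linarith)).2 ⟨by linarith, by linarith⟩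

end

theorem no_two_mixed_arcs_cross_general {V : Type*}
    (t h w : V → ℝ)
    (F : V → Set (ℝ × ℝ)) (hF : ∀ v, F v = Aframe (t v) (h v) (w v))
    (B R : Set V)
    (b₁ r₁ b₂ r₂ u₁ u₂ : V)
    (h₁ : MixedWitness F t B R u₁ b₁ r₁)
    (h₂ : MixedWitness F t B R u₂ b₂ r₂) :
    ¬ Interleave (min (t b₁) (t r₁)) (t u₁) (min (t b₂) (t r₂)) (t u₂) ∧
    ¬ Interleave (t u₁) (max (t b₁) (t r₁)) (t u₂) (max (t b₂) (t r₂)) := by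
  refine ⟨?_, ?_⟩ <;> rintro (hcross | hcross)
  · exact h₁.not_cross_low hF h₂ hcross
  · exact h₂.not_cross_low hF h₁ hcross
  · exact h₁.not_cross_high hF h₂ hcross
  · exact h₂.not_cross_high hF h₁ hcross

/-- No two mixed arcs cross. -/
theorem no_two_mixed_arcs_cross {V : Type*} [Fintype V]
    (t h w : V → ℝ) (hh : ∀ v, 0 ≤ h v) (hw : ∀ v, 0 ≤ w v)
    (F : V → Set (ℝ × ℝ)) (hF : ∀ v, F v = Aframe (t v) (h v) (w v))
    (B R : Set V) (hBR : Disjoint B R)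
    (hB : IsDomSet (interGraph F) B) (hR : IsDomSet (interGraph F) R)
    (b₁ r₁ b₂ r₂ u₁ u₂ : V)
    (h₁ : MixedWitness F t B R u₁ b₁ r₁)
    (h₂ : MixedWitness F t B R u₂ b₂ r₂)
    (hne : t u₁ ≠ t u₂) :
    ¬ Interleave (min (t b₁) (t r₁)) (t u₁) (min (t b₂) (t r₂)) (t u₂) ∧
    ¬ Interleave (t u₁) (max (t b₁) (t r₁)) (t u₂) (max (t b₂) (t r₂)) :=
  no_two_mixed_arcs_cross_general t h w F hF B R b₁ r₁ b₂ r₂ u₁ u₂ h₁ h₂
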